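/- In a directed-complete cone, scalar multiplication is Scott-continuous: for any directed subset K of ℝ≥0 bounded above and any directed bounded subset E of C, sup{λ·x : λ ∈ K, x ∈ E} = (sup K)·(sup E). -/

import Mathlib

class PCone (C : Type*) extends AddCommMonoid C, Module NNReal C where
  cnorm : C → NNReal
  add_left_cancel' : ∀ x y y' : C, x + y = x + y' → y = y'
  cnorm_smul : ∀ (a : NNReal) (x : C), cnorm (a • x) = a * cnorm x
  cnorm_add_le : ∀ x y : C, cnorm (x + y) ≤ cnorm x + cnorm y
  cnorm_eq_zero : ∀ x : C, cnorm x = 0 → x = 0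
  cnorm_le_add : ∀ x y : C, cnorm x ≤ cnorm (x + y)

/-- The cone order: `x ≤ y` iff `y = x + z` for some `z`. -/
def cle {C : Type*} [PCone C] (x y : C) : Prop := ∃ z : C, y = x + z

/-- `b` is an upper bound of `s` for the cone order. -/
def IsUBc {C : Type*} [PCone C] (s : Set C) (b : C) : Prop := ∀ a ∈ s, cle a b

/-- `j` is a least upper bound of `s` for the cone order. -/
def IsLUBc {C : Type*} [PCone C] (s : Set C) (j : C) : Prop :=
  IsUBc s j ∧ ∀ b, IsUBc s b → cle j b

/-- `b` is a lower bound of `s` for the cone order. -/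
def IsLBc {C : Type*} [PCone C] (s : Set C) (b : C) : Prop := ∀ a ∈ s, cle b a

/-- `g` is a greatest lower bound of `s` for the cone order. -/
def IsGLBc {C : Type*} [PCone C] (s : Set C) (g : C) : Prop :=
  IsLBc s g ∧ ∀ b, IsLBc s b → cle b g

/-- `D` is directed for the cone order. -/
def DirC {C : Type*} [PCone C] (D : Set C) : Prop :=
  D.Nonempty ∧ ∀ x ∈ D, ∀ y ∈ D, ∃ z ∈ D, cle x z ∧ cle y z

/-- `D` is directed for the reverse cone order. -/
def RevDirC {C : Type*} [PCone C] (D : Set C) : Prop :=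
  D.Nonempty ∧ ∀ x ∈ D, ∀ y ∈ D, ∃ z ∈ D, cle z x ∧ cle z y

/-!
The upper bound property is immediate; the content is that `κ • sE ≤ b` for every upper bound
`b`. Dividing by `l ≠ 0` shows `l • sE ≤ b` for each `l ∈ K`, so it remains to see that
`κ • y` is the supremum of the directed set `{l • y | l ∈ K}`. That supremum `s` exists by
directed completeness (after rescaling into the unit ball) and satisfies `κ • y = s + r`.
Since `l • y ≤ s`, cancellation gives `r ≤ (κ - l) • y`, so `‖r‖ ≤ (κ - l) ‖y‖` for all
`l ∈ K`, which forces `‖r‖ = 0` because `κ = sup K`.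
-/

open PCone Pointwise

lemma NNReal.eq_zero_of_forall_le_tsub_mul {K : Set NNReal} {κ c n : NNReal}
    (hK : K.Nonempty) (hκ : IsLUB K κ) (h : ∀ l ∈ K, c ≤ (κ - l) * n) : c = 0 := by
  obtain ⟨l₀, hl₀⟩ := hK
  have hc : c ≤ κ * n := (h l₀ hl₀).trans (mul_le_mul_left tsub_le_self n)
  have hκn : IsLUB ((· * n) '' K) (κ * n) := hκ.mul_right (zero_le : 0 ≤ n)
  have hle : κ * n ≤ κ * n - c := by
    refine hκn.2 ?_
    rintro _ ⟨l, hl, rfl⟩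
    rw [le_tsub_iff_left hc, ← le_tsub_iff_right (hκn.1 ⟨l, hl, rfl⟩), ← tsub_mul]
    exact h l hl
  rw [le_tsub_iff_left hc] at hle
  simpa using hle

def DirectedComplete (C : Type*) [PCone C] : Prop :=
  ∀ D : Set C, (∀ x ∈ D, cnorm x ≤ 1) → DirC D → ∃ s : C, cnorm s ≤ 1 ∧ IsLUBc D s

section Cone

variable {C : Type*} [PCone C]

lemma cle_refl (x : C) : cle x x := ⟨0, (add_zero x).symm⟩

lemma zero_cle (x : C) : cle 0 x := ⟨x, (zero_add x).symm⟩

lemma cle_trans {x y z : C} (hxy : cle x y) (hyz : cle y z) : cle x z := by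
  obtain ⟨u, rfl⟩ := hxy
  obtain ⟨v, rfl⟩ := hyz
  exact ⟨u + v, add_assoc x u v⟩

lemma cle_add_right {x y : C} (h : cle x y) (a : C) : cle (x + a) (y + a) := by
  obtain ⟨z, rfl⟩ := h
  exact ⟨z, add_right_comm x z a⟩

lemma cle_of_add_cle_add_left {a x y : C} (h : cle (a + x) (a + y)) : cle x y := by
  obtain ⟨z, hz⟩ := h
  exact ⟨z, add_left_cancel' a y (x + z) (by rw [hz, add_assoc])⟩

lemma cnorm_le_cnorm_of_cle {x y : C} (h : cle x y) : cnorm x ≤ cnorm y := by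
  obtain ⟨z, rfl⟩ := h
  exact cnorm_le_add x z

lemma smul_cle_smul (a : NNReal) {x y : C} (h : cle x y) : cle (a • x) (a • y) := by
  obtain ⟨z, rfl⟩ := h
  exact ⟨a • z, smul_add a x z⟩

lemma smul_cle_smul_iff {a : NNReal} (ha : a ≠ 0) {x y : C} :
    cle (a • x) (a • y) ↔ cle x y := by
  refine ⟨fun h => ?_, smul_cle_smul a⟩
  simpa only [inv_smul_smul₀ ha] using smul_cle_smul a⁻¹ h

lemma smul_cle_smul_of_le {a b : NNReal} (h : a ≤ b) (x : C) : cle (a • x) (b • x) :=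
  ⟨(b - a) • x, by rw [← add_smul, add_tsub_cancel_of_le h]⟩

lemma DirC.smul {D : Set C} (hD : DirC D) (a : NNReal) : DirC (a • D) := by
  refine ⟨hD.1.smul_set, ?_⟩
  rintro _ ⟨x, hx, rfl⟩ _ ⟨y, hy, rfl⟩
  obtain ⟨z, hz, hxz, hyz⟩ := hD.2 x hx y hy
  exact ⟨a • z, Set.smul_mem_smul_set hz, smul_cle_smul a hxz, smul_cle_smul a hyz⟩

lemma IsLUBc.smul {D : Set C} {s : C} (hs : IsLUBc D s) {a : NNReal} (ha : a ≠ 0) :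
    IsLUBc (a • D) (a • s) := by
  refine ⟨?_, fun b hb => ?_⟩
  · rintro _ ⟨x, hx, rfl⟩
    exact smul_cle_smul a (hs.1 x hx)
  · rw [← smul_inv_smul₀ ha b, smul_cle_smul_iff ha]
    refine hs.2 _ fun x hx => ?_
    rw [← smul_cle_smul_iff ha, smul_inv_smul₀ ha]
    exact hb _ (Set.smul_mem_smul_set hx)

lemma DirectedComplete.exists_isLUBc (hdc : DirectedComplete C) {D : Set C} {M : NNReal}
    (hbd : ∀ x ∈ D, cnorm x ≤ M) (hD : DirC D) : ∃ s : C, IsLUBc D s := by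
  have hM : M + 1 ≠ 0 := by positivity
  have hbd' : ∀ x ∈ (M + 1)⁻¹ • D, cnorm x ≤ 1 := by
    rintro _ ⟨x, hx, rfl⟩
    rw [cnorm_smul, inv_mul_le_one₀ (pos_iff_ne_zero.mpr hM)]
    exact (hbd x hx).trans (le_add_of_nonneg_right zero_le_one)
  obtain ⟨s, -, hs⟩ := hdc _ hbd' (hD.smul _)
  exact ⟨(M + 1) • s, by simpa only [smul_inv_smul₀ hM] using hs.smul hM⟩

lemma dirC_image_smul {K : Set NNReal} (hK : K.Nonempty) (hKdir : DirectedOn (· ≤ ·) K)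
    (y : C) : DirC ((· • y) '' K) := by
  refine ⟨hK.image _, ?_⟩
  rintro _ ⟨l, hl, rfl⟩ _ ⟨l', hl', rfl⟩
  obtain ⟨m, hm, hlm, hl'm⟩ := hKdir l hl l' hl'
  exact ⟨m • y, ⟨m, hm, rfl⟩, smul_cle_smul_of_le hlm y, smul_cle_smul_of_le hl'm y⟩

lemma DirectedComplete.isLUBc_image_smul (hdc : DirectedComplete C) {K : Set NNReal}
    (hK : K.Nonempty) (hKdir : DirectedOn (· ≤ ·) K) {κ : NNReal} (hκ : IsLUB K κ) (y : C) :
    IsLUBc ((· • y) '' K) (κ • y) := by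
  have hbd : ∀ x ∈ (· • y) '' K, cnorm x ≤ κ * cnorm y := by
    rintro _ ⟨l, hl, rfl⟩
    rw [cnorm_smul]
    exact mul_le_mul_left (hκ.1 hl) _
  obtain ⟨s, hs⟩ := hdc.exists_isLUBc hbd (dirC_image_smul hK hKdir y)
  obtain ⟨r, hr⟩ : cle s (κ • y) := by
    refine hs.2 _ ?_
    rintro _ ⟨l, hl, rfl⟩
    exact smul_cle_smul_of_le (hκ.1 hl) y
  have hr_le : ∀ l ∈ K, cnorm r ≤ (κ - l) * cnorm y := by
    intro l hl
    have h : cle (l • y + r) (l • y + (κ - l) • y) := by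
      rw [← add_smul, add_tsub_cancel_of_le (hκ.1 hl), hr]
      exact cle_add_right (hs.1 _ ⟨l, hl, rfl⟩) r
    rw [← cnorm_smul]
    exact cnorm_le_cnorm_of_cle (cle_of_add_cle_add_left h)
  have hr0 : r = 0 := cnorm_eq_zero r (NNReal.eq_zero_of_forall_le_tsub_mul hK hκ hr_le)
  rwa [hr, hr0, add_zero]

end Cone

theorem smul_scott_continuous_general {C : Type*} [PCone C]
    (hdc : ∀ D : Set C, (∀ x ∈ D, PCone.cnorm x ≤ 1) → DirC D →
      ∃ s : C, PCone.cnorm s ≤ 1 ∧ IsLUBc D s)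
    (K : Set NNReal) (hK : K.Nonempty) (hKdir : DirectedOn (· ≤ ·) K)
    (κ : NNReal) (hκ : IsLUB K κ)
    (E : Set C)
    (sE : C) (hsE : IsLUBc E sE) :
    IsLUBc {w : C | ∃ l ∈ K, ∃ x ∈ E, w = l • x} (κ • sE) := by
  refine ⟨?_, fun b hb => ?_⟩
  · rintro _ ⟨l, hl, x, hx, rfl⟩
    exact cle_trans (smul_cle_smul l (hsE.1 x hx)) (smul_cle_smul_of_le (hκ.1 hl) sE)
  · have hl_le : ∀ l ∈ K, cle (l • sE) b := by
      intro l hl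
      rcases eq_or_ne l 0 with rfl | hl0
      · rw [zero_smul]
        exact zero_cle b
      · refine (hsE.smul hl0).2 b ?_
        rintro _ ⟨x, hx, rfl⟩
        exact hb _ ⟨l, hl, x, hx, rfl⟩
    refine (DirectedComplete.isLUBc_image_smul hdc hK hKdir hκ sE).2 b ?_
    rintro _ ⟨l, hl, rfl⟩
    exact hl_le l hl

/-- In a directed-complete cone, scalar multiplication is Scott-continuous:
`sup {λ • x : λ ∈ K, x ∈ E} = (sup K) • (sup E)` for a directed bounded-above
`K ⊆ ℝ≥0` and a directed bounded `E ⊆ C`. -/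
theorem smul_scott_continuous {C : Type*} [PCone C]
    (hdc : ∀ D : Set C, (∀ x ∈ D, PCone.cnorm x ≤ 1) → DirC D →
      ∃ s : C, PCone.cnorm s ≤ 1 ∧ IsLUBc D s)
    (K : Set NNReal) (hK : K.Nonempty) (hKdir : DirectedOn (· ≤ ·) K)
    (κ : NNReal) (hκ : IsLUB K κ)
    (E : Set C) (hE : DirC E) (hEbdd : ∃ b : C, IsUBc E b)
    (sE : C) (hsE : IsLUBc E sE) :
    IsLUBc {w : C | ∃ l ∈ K, ∃ x ∈ E, w = l • x} (κ • sE) :=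
  smul_scott_continuous_general hdc K hK hKdir κ hκ E sE hsE
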